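/- (Example 4.10, explicit feature maps for first and second moments on the unit ball.) Let Y = {y ∈ ℝ^d : ‖y‖_2 ≤ 1}, W := ℝ^d × Sym_d(ℝ) with inner product ⟨(v,Q),(v′,Q′)⟩ := ⟨v,v′⟩ + Tr(QQ′), s(y) := (y, y y^⊤), and Z := {(v,Q) ∈ W : Q ⪰ 0, Q ⪰ v v^⊤, Tr(Q) ≤ 1}. Let g_1, …, g_r : X × W → W be arbitrary functions with sup_{x ∈ X, p ∈ Z} ‖g_j(x,p)‖ ≤ B for every j, and define Φ(x,p) : W → ℝ^r by (Φ(x,p)(u))_j := ⟨g_j(x,p), u⟩, so that ‖Φ(x,p)‖_op² ≤ r·B². Let y_1,…,y_T ∈ Y be realized outcomes with targets z_t := s(y_t), suppose the EVI condition holds with tolerances ε_t ≤ 4·r·B², and suppose for each t and each p in the support of D_t, μ_{t,p} is a finitely supported probability measure on Y with E_{ỹ∼μ_{t,p}}[s(ỹ)] = p. Then for every j ∈ {1,…,r}, the distinguisher f(x,p,y) := ⟨g_j(x,p), s(y)⟩ satisfies OIGap_T(f) ≤ 4·sqrt(r·B²·T). -/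

import Mathlib

open scoped BigOperators RealInnerProductSpace
open MeasureTheory

/-- A finitely supported probability distribution, given by finitely many
weighted atoms. -/
structure FinDist (α : Type*) where
  n : ℕ
  w : Fin n → ℝ
  pt : Fin n → α
  w_nonneg : ∀ i, 0 ≤ w i
  w_sum : ∑ i, w i = 1

namespace FinDist

noncomputable def exp {α V : Type*} [AddCommMonoid V] [Module ℝ V]
    (D : FinDist α) (f : α → V) : V :=
  ∑ i, D.w i • f (D.pt i)

def support {α : Type*} (D : FinDist α) : Set α :=
  {a | ∃ i, D.w i ≠ 0 ∧ D.pt i = a}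

end FinDist

/-- The space of symmetric `d × d` real matrices (as a subspace of the
Euclidean space of all `d × d` matrices with the Frobenius inner product). -/
def symMatrices (d : ℕ) : Submodule ℝ (EuclideanSpace ℝ (Fin d × Fin d)) where
  carrier := {Q | ∀ i j, Q (i, j) = Q (j, i)}
  add_mem' := by
    intro A B hA hB i j
    show A (i, j) + B (i, j) = A (j, i) + B (j, i)
    rw [hA i j, hB i j]
  zero_mem' := by intro i j; rfl
  smul_mem' := by
    intro c A hA i j
    show c * A (i, j) = c * A (j, i)
    rw [hA i j]

/-- `W = ℝ^d × Sym_d(ℝ)` with inner product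
`⟨(v,Q),(v',Q')⟩ = ⟨v,v'⟩ + Tr(QQ')`. -/
abbrev Wspace (d : ℕ) :=
  WithLp 2 (EuclideanSpace ℝ (Fin d) × symMatrices d)

/-- The statistic map `s(y) = (y, y yᵀ)`. -/
noncomputable def sVec (d : ℕ) (y : EuclideanSpace ℝ (Fin d)) : Wspace d :=
  (WithLp.equiv 2 (EuclideanSpace ℝ (Fin d) × symMatrices d)).symm
    (y, ⟨(WithLp.equiv 2 (∀ _ : Fin d × Fin d, ℝ)).symm fun q => y q.1 * y q.2,
      fun i j => mul_comm (y i) (y j)⟩)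

/-- The second component of an element of `Wspace d`, as a matrix. -/
noncomputable def sndMatrix {d : ℕ} (p : Wspace d) : Matrix (Fin d) (Fin d) ℝ :=
  Matrix.of fun i j => (p.ofLp.2 : EuclideanSpace ℝ (Fin d × Fin d)) (i, j)

/-- `Z := {(v,Q) : Q ⪰ 0, Q ⪰ vvᵀ, Tr Q ≤ 1}` inside `Wspace d`. -/
noncomputable def psdMomentSet (d : ℕ) : Set (Wspace d) :=
  {p | (sndMatrix p).PosSemidef ∧
    ((sndMatrix p) - Matrix.vecMulVec p.ofLp.1.ofLp p.ofLp.1.ofLp).PosSemidef ∧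
    (sndMatrix p).trace ≤ 1}


/-! Because `μ_{t,p}` has mean `p` under `s`, the gap of the distinguisher `⟪g_j(x,p), s(·)⟫`
in round `t` is `E_{p∼D_t} ⟪g_j(x_t,p), s(y_t) - p⟫`, the `j`-th coordinate of `w_t`; so the
total gap is bounded by `‖M_T‖`. Testing the EVI condition at `z = s(y_t) ∈ Z` bounds the
cross term in `‖M_t‖² = ‖M_{t-1}‖² + 2⟪M_{t-1}, w_t⟫ + ‖w_t‖²` by `2ε_t ≤ 8rB²`, while
`‖w_t‖² ≤ rB² · diam(Z)² ≤ 8rB²`, whence `‖M_T‖² ≤ 16rB²T`. -/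

namespace FinDist

variable {α V : Type*}

lemma map_exp [AddCommMonoid V] [Module ℝ V] {V' : Type*} [AddCommMonoid V'] [Module ℝ V']
    (D : FinDist α) (L : V →ₗ[ℝ] V') (f : α → V) :
    L (D.exp f) = D.exp (fun a => L (f a)) := by
  simp [exp, map_sum]

lemma exp_sub [AddCommGroup V] [Module ℝ V] (D : FinDist α) (f g : α → V) :
    D.exp (fun a => f a - g a) = D.exp f - D.exp g := by
  simp [exp, smul_sub, Finset.sum_sub_distrib]

lemma exp_congr [AddCommMonoid V] [Module ℝ V] (D : FinDist α) {f g : α → V}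
    (h : ∀ a ∈ D.support, f a = g a) : D.exp f = D.exp g := by
  refine Finset.sum_congr rfl fun i _ => ?_
  rcases eq_or_ne (D.w i) 0 with h0 | h0
  · simp [h0]
  · rw [h _ ⟨i, h0, rfl⟩]

lemma norm_exp_le [SeminormedAddCommGroup V] [NormedSpace ℝ V] (D : FinDist α) {f : α → V}
    {C : ℝ} (h : ∀ a ∈ D.support, ‖f a‖ ≤ C) : ‖D.exp f‖ ≤ C := by
  calc ‖D.exp f‖ ≤ ∑ i, ‖D.w i • f (D.pt i)‖ := norm_sum_le _ _
    _ ≤ ∑ i, D.w i * C := by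
        refine Finset.sum_le_sum fun i _ => ?_
        rcases eq_or_ne (D.w i) 0 with h0 | h0
        · simp [h0]
        · rw [norm_smul, Real.norm_of_nonneg (D.w_nonneg i)]
          exact mul_le_mul_of_nonneg_left (h _ ⟨i, h0, rfl⟩) (D.w_nonneg i)
    _ = C := by rw [← Finset.sum_mul, D.w_sum, one_mul]

lemma inner_exp_right [NormedAddCommGroup V] [InnerProductSpace ℝ V]
    (D : FinDist α) (v : V) (f : α → V) :
    ⟪v, D.exp f⟫ = D.exp (fun a => ⟪v, f a⟫) :=
  D.map_exp (innerₛₗ ℝ v) f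

lemma exp_apply {ι : Type*} [Fintype ι] (D : FinDist α) (f : α → EuclideanSpace ℝ ι) (i : ι) :
    D.exp f i = D.exp (fun a => f a i) :=
  D.map_exp (EuclideanSpace.proj i : EuclideanSpace ℝ ι →L[ℝ] ℝ).toLinearMap f

lemma exp_inner_sub_exp_exp_inner [NormedAddCommGroup V] [InnerProductSpace ℝ V] {β : Type*}
    (D : FinDist V) (μ : V → FinDist β) (s : β → V)
    (hμ : ∀ p ∈ D.support, (μ p).exp s = p) (G : V → V) (z : V) :
    D.exp (fun p => ⟪G p, z⟫) - D.exp (fun p => (μ p).exp (fun b => ⟪G p, s b⟫)) =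
      D.exp (fun p => ⟪G p, z - p⟫) := by
  rw [← exp_sub]
  refine D.exp_congr fun p hp => ?_
  rw [← inner_exp_right, hμ p hp, inner_sub_right]

end FinDist

lemma norm_sum_range_sq_le_of_inner_le {V : Type*} [NormedAddCommGroup V]
    [InnerProductSpace ℝ V] (T : ℕ) (w : ℕ → V) (ε : ℕ → ℝ) (c : ℝ)
    (hinner : ∀ t < T, ⟪∑ τ ∈ Finset.range t, w τ, w t⟫ ≤ ε t)
    (hc : ∀ t < T, ‖w t‖ ^ 2 + 2 * ε t ≤ c) :
    ‖∑ t ∈ Finset.range T, w t‖ ^ 2 ≤ c * T := by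
  induction T with
  | zero => simp
  | succ n ih =>
    have hprev := ih (fun t ht => hinner t (by omega)) (fun t ht => hc t (by omega))
    rw [Finset.sum_range_succ, norm_add_sq_real]
    have := hinner n n.lt_succ_self
    have := hc n n.lt_succ_self
    push_cast
    linarith

lemma norm_sq_toLp_inner_le {E ι : Type*} [NormedAddCommGroup E] [InnerProductSpace ℝ E]
    [Fintype ι] (g : ι → E) (u : E) {B : ℝ} (hg : ∀ i, ‖g i‖ ≤ B) :
    ‖(WithLp.equiv 2 (ι → ℝ)).symm (fun i => ⟪g i, u⟫)‖ ^ 2 ≤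
      Fintype.card ι * B ^ 2 * ‖u‖ ^ 2 := by
  rw [EuclideanSpace.norm_sq_eq]
  calc ∑ i, ‖⟪g i, u⟫‖ ^ 2 ≤ ∑ _i : ι, (B * ‖u‖) ^ 2 := by
        refine Finset.sum_le_sum fun i _ => pow_le_pow_left₀ (norm_nonneg _) ?_ 2
        exact (norm_inner_le_norm _ _).trans
          (mul_le_mul_of_nonneg_right (hg i) (norm_nonneg u))
    _ = Fintype.card ι * B ^ 2 * ‖u‖ ^ 2 := by simp [mul_pow, mul_assoc]

namespace Matrix.PosSemidef

variable {n : Type*} [Fintype n] [DecidableEq n] {Q : Matrix n n ℝ}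

lemma sq_apply_le_mul_diag (hQ : Q.PosSemidef) (i j : n) : Q i j ^ 2 ≤ Q i i * Q j j := by
  rcases eq_or_ne i j with rfl | _
  · rw [sq]
  have hsymm : Q j i = Q i j := hQ.isHermitian.apply i j
  -- the form at `a eᵢ + eⱼ` is a nonnegative quadratic in `a`, so its discriminant is `≤ 0`
  have hquad : ∀ a : ℝ, 0 ≤ Q i i * (a * a) + (2 * Q i j) * a + Q j j := by
    intro a
    have h := hQ.dotProduct_mulVec_nonneg (Pi.single i a + Pi.single j 1)
    simp only [star_trivial, dotProduct, mulVec, Pi.add_apply, Pi.single_apply, mul_add,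
      add_mul, ite_mul, mul_ite, mul_zero, zero_mul, mul_one, one_mul, Finset.sum_add_distrib,
      Finset.sum_ite_eq', Finset.mem_univ, if_true, hsymm] at h
    linarith
  have := discrim_le_zero hquad
  rw [discrim] at this
  linarith

lemma sum_sq_apply_le_trace_sq (hQ : Q.PosSemidef) :
    ∑ q : n × n, Q q.1 q.2 ^ 2 ≤ Q.trace ^ 2 := by
  rw [Fintype.sum_prod_type, trace, sq, Finset.sum_mul_sum]
  exact Finset.sum_le_sum fun i _ => Finset.sum_le_sum fun j _ => hQ.sq_apply_le_mul_diag i j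

end Matrix.PosSemidef

section MomentSet

variable {d : ℕ}

lemma Wspace.norm_sq_eq (p : Wspace d) :
    ‖p‖ ^ 2 = ‖p.ofLp.1‖ ^ 2 + ∑ q : Fin d × Fin d, sndMatrix p q.1 q.2 ^ 2 := by
  rw [WithLp.prod_norm_sq_eq_of_L2]
  congr 1
  refine (EuclideanSpace.norm_sq_eq (p.ofLp.2 : EuclideanSpace ℝ (Fin d × Fin d))).trans ?_
  simp [sndMatrix]

lemma EuclideanSpace.trace_vecMulVec_self (v : EuclideanSpace ℝ (Fin d)) :
    (Matrix.vecMulVec v.ofLp v.ofLp).trace = ‖v‖ ^ 2 := by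
  rw [Matrix.trace_vecMulVec, ← real_inner_self_eq_norm_sq,
    EuclideanSpace.inner_eq_star_dotProduct]
  simp

lemma norm_sq_le_two_of_mem_psdMomentSet {p : Wspace d} (hp : p ∈ psdMomentSet d) :
    ‖p‖ ^ 2 ≤ 2 := by
  obtain ⟨hQ, hQv, htrace⟩ := hp
  have htrace_nonneg := hQ.trace_nonneg
  have hv : ‖p.ofLp.1‖ ^ 2 ≤ (sndMatrix p).trace := by
    have := hQv.trace_nonneg
    rw [Matrix.trace_sub, EuclideanSpace.trace_vecMulVec_self] at this
    linarith
  have hQ_sq : ∑ q : Fin d × Fin d, sndMatrix p q.1 q.2 ^ 2 ≤ 1 :=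
    hQ.sum_sq_apply_le_trace_sq.trans (by nlinarith)
  rw [Wspace.norm_sq_eq]
  linarith

lemma norm_sub_sq_le_eight_of_mem_psdMomentSet {p q : Wspace d} (hp : p ∈ psdMomentSet d)
    (hq : q ∈ psdMomentSet d) : ‖p - q‖ ^ 2 ≤ 8 := by
  have := pow_le_pow_left₀ (norm_nonneg _) (norm_sub_le p q) 2
  nlinarith [norm_sq_le_two_of_mem_psdMomentSet hp, norm_sq_le_two_of_mem_psdMomentSet hq,
    sq_nonneg (‖p‖ - ‖q‖)]

lemma sndMatrix_sVec (y : EuclideanSpace ℝ (Fin d)) :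
    sndMatrix (sVec d y) = Matrix.vecMulVec y.ofLp y.ofLp :=
  rfl

lemma sVec_mem_psdMomentSet {y : EuclideanSpace ℝ (Fin d)} (hy : ‖y‖ ≤ 1) :
    sVec d y ∈ psdMomentSet d := by
  have hyy : (Matrix.vecMulVec y.ofLp y.ofLp).PosSemidef := by
    simpa using Matrix.posSemidef_vecMulVec_self_star y.ofLp
  refine ⟨hyy, ?_, ?_⟩
  · rw [show (sVec d y).ofLp.1 = y from rfl, sndMatrix_sVec, sub_self]
    exact .zero
  · rw [sndMatrix_sVec, EuclideanSpace.trace_vecMulVec_self]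
    nlinarith [norm_nonneg y]

end MomentSet

theorem stmt_19_general
    {X : Type*} {d r : ℕ}
    (B : ℝ)
    (g : Fin r → X → Wspace d → Wspace d)
    (hB : ∀ (j : Fin r) (x : X), ∀ p ∈ psdMomentSet d, ‖g j x p‖ ≤ B)
    (T : ℕ)
    (x : ℕ → X) (y : ℕ → EuclideanSpace ℝ (Fin d)) (hy : ∀ t < T, ‖y t‖ ≤ 1)
    (D : ℕ → FinDist (Wspace d))
    (hD : ∀ t < T, (D t).support ⊆ psdMomentSet d)
    (ε : ℕ → ℝ)
    (hεle : ∀ t < T, ε t ≤ 4 * (r : ℝ) * B ^ 2)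
    (hEVI : ∀ t < T, ∀ z' ∈ psdMomentSet d,
      (D t).exp (fun p =>
        (⟪(∑ τ ∈ Finset.range t, (D τ).exp (fun q =>
            (WithLp.equiv 2 (∀ _ : Fin r, ℝ)).symm
              (fun j => (⟪g j (x τ) q, sVec d (y τ) - q⟫ : ℝ)))),
          (WithLp.equiv 2 (∀ _ : Fin r, ℝ)).symm
            (fun j => (⟪g j (x t) p, z' - p⟫ : ℝ))⟫)) ≤ ε t)
    (μ : ℕ → Wspace d → FinDist (EuclideanSpace ℝ (Fin d)))
    (hμ : ∀ t < T, ∀ p ∈ (D t).support, (μ t p).exp (fun y' => sVec d y') = p)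
    (j : Fin r) :
    |(∑ t ∈ Finset.range T,
        (D t).exp (fun p => (⟪g j (x t) p, sVec d (y t)⟫ : ℝ)))
      - (∑ t ∈ Finset.range T, (D t).exp (fun p =>
          (μ t p).exp (fun y' => (⟪g j (x t) p, sVec d y'⟫ : ℝ))))| ≤
      4 * Real.sqrt ((r : ℝ) * B ^ 2 * (T : ℝ)) := by
  set w : ℕ → EuclideanSpace ℝ (Fin r) := fun t => (D t).exp (fun p =>
    (WithLp.equiv 2 (∀ _ : Fin r, ℝ)).symm (fun j => ⟪g j (x t) p, sVec d (y t) - p⟫)) with hw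
  have hinner : ∀ t < T, ⟪∑ τ ∈ Finset.range t, w τ, w t⟫ ≤ ε t := fun t ht => by
    rw [FinDist.inner_exp_right]
    exact hEVI t ht _ (sVec_mem_psdMomentSet (hy t ht))
  have hnorm : ∀ t < T, ‖w t‖ ^ 2 ≤ 8 * r * B ^ 2 := fun t ht => by
    refine (Real.le_sqrt (norm_nonneg _) (by positivity)).mp
      (FinDist.norm_exp_le _ fun p hp => ?_)
    refine (Real.le_sqrt (norm_nonneg _) (by positivity)).mpr
      ((norm_sq_toLp_inner_le _ _ fun i => hB i _ _ (hD t ht hp)).trans ?_)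
    have := norm_sub_sq_le_eight_of_mem_psdMomentSet (sVec_mem_psdMomentSet (hy t ht)) (hD t ht hp)
    rw [Fintype.card_fin]
    exact (mul_le_mul_of_nonneg_left this (by positivity)).trans_eq (by ring)
  have hsum : ‖∑ t ∈ Finset.range T, w t‖ ^ 2 ≤ (4 * √(r * B ^ 2 * T)) ^ 2 := by
    rw [mul_pow, Real.sq_sqrt (by positivity)]
    have := norm_sum_range_sq_le_of_inner_le T w ε (16 * r * B ^ 2) hinner fun t ht => by
      linarith [hnorm t ht, hεle t ht]
    linarith
  have hgap : ∑ t ∈ Finset.range T, (D t).exp (fun p => ⟪g j (x t) p, sVec d (y t)⟫)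
      - ∑ t ∈ Finset.range T, (D t).exp (fun p =>
          (μ t p).exp (fun y' => ⟪g j (x t) p, sVec d y'⟫)) = (∑ t ∈ Finset.range T, w t) j := by
    rw [← Finset.sum_sub_distrib, WithLp.ofLp_sum, Finset.sum_apply]
    refine Finset.sum_congr rfl fun t ht => ?_
    rw [FinDist.exp_inner_sub_exp_exp_inner _ _ _ (hμ t (Finset.mem_range.mp ht)), hw,
      FinDist.exp_apply]
    rfl
  calc _ = |(∑ t ∈ Finset.range T, w t) j| := by rw [hgap]
    _ ≤ ‖∑ t ∈ Finset.range T, w t‖ := by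
        rw [← Real.norm_eq_abs]
        exact PiLp.norm_apply_le _ j
    _ ≤ 4 * √(r * B ^ 2 * T) := le_of_pow_le_pow_left₀ two_ne_zero (by positivity) hsum

/-- Example 4.10: explicit feature maps for first and second
moments on the unit ball.  With `H = ℝ^r`, `Φ(x,p)(u)_j = ⟨g_j(x,p), u⟩`,
targets `s(y_t) = (y_t, y_t y_tᵀ)`, EVI tolerances `ε_t ≤ 4rB²`, and
generating measures on the unit ball matching the forecast moments, each
distinguisher `f(x,p,y) = ⟨g_j(x,p), s(y)⟩` has
`OIGap_T(f) ≤ 4 sqrt(r B² T)`. -/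
theorem stmt_19
    {X : Type*} [Nonempty X] {d r : ℕ} (hd : 1 ≤ d) (hr : 1 ≤ r)
    (B : ℝ)
    (g : Fin r → X → Wspace d → Wspace d)
    (hB : ∀ (j : Fin r) (x : X), ∀ p ∈ psdMomentSet d, ‖g j x p‖ ≤ B)
    (T : ℕ) (hT : 1 ≤ T)
    (x : ℕ → X) (y : ℕ → EuclideanSpace ℝ (Fin d)) (hy : ∀ t < T, ‖y t‖ ≤ 1)
    (D : ℕ → FinDist (Wspace d))
    (hD : ∀ t < T, (D t).support ⊆ psdMomentSet d)
    (ε : ℕ → ℝ) (hε : ∀ t < T, 0 ≤ ε t)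
    (hεle : ∀ t < T, ε t ≤ 4 * (r : ℝ) * B ^ 2)
    (hEVI : ∀ t < T, ∀ z' ∈ psdMomentSet d,
      (D t).exp (fun p =>
        (⟪(∑ τ ∈ Finset.range t, (D τ).exp (fun q =>
            (WithLp.equiv 2 (∀ _ : Fin r, ℝ)).symm
              (fun j => (⟪g j (x τ) q, sVec d (y τ) - q⟫ : ℝ)))),
          (WithLp.equiv 2 (∀ _ : Fin r, ℝ)).symm
            (fun j => (⟪g j (x t) p, z' - p⟫ : ℝ))⟫)) ≤ ε t)
    (μ : ℕ → Wspace d → FinDist (EuclideanSpace ℝ (Fin d)))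
    (hμY : ∀ t < T, ∀ p ∈ (D t).support, ∀ k, ‖(μ t p).pt k‖ ≤ 1)
    (hμ : ∀ t < T, ∀ p ∈ (D t).support, (μ t p).exp (fun y' => sVec d y') = p)
    (j : Fin r) :
    |(∑ t ∈ Finset.range T,
        (D t).exp (fun p => (⟪g j (x t) p, sVec d (y t)⟫ : ℝ)))
      - (∑ t ∈ Finset.range T, (D t).exp (fun p =>
          (μ t p).exp (fun y' => (⟪g j (x t) p, sVec d y'⟫ : ℝ))))| ≤
      4 * Real.sqrt ((r : ℝ) * B ^ 2 * (T : ℝ)) :=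
  stmt_19_general B g hB T x y hy D hD ε hεle hEVI μ hμ j
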